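/- The sequence N ↦ T_N^* of maxima of T_N over the admissible simplex is strictly increasing. -/

import Mathlib

open Real

/-- The finite-horizon throughput functional `T_N` (log base 2), evaluated at a
sequence indexed from 1 (only coordinates `1,…,N` matter). -/
noncomputable def TN (B γ p : ℝ) (w N : ℕ) (ξ : ℕ → ℝ) : ℝ :=
  (∑ k ∈ Finset.Icc 1 w, p ^ 2 * (1 - p) ^ (k - 1) * ((k : ℝ) / 2) *
      Real.logb 2 (1 + γ * B / k))
  + (∑ j ∈ Finset.Icc 1 N, p * (1 - p) ^ (j + w - 1) * (1 / 2) *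
      Real.logb 2 (1 + γ * ξ j))
  + (∑ k ∈ Finset.Icc 1 N, p ^ 2 * (1 - p) ^ (k + w - 1) * ((w : ℝ) / 2) *
      Real.logb 2 (1 + (γ / w) * (B - ∑ j ∈ Finset.Icc 1 k, ξ j)))
  + p * (1 - p) ^ (w + N) * ((w : ℝ) / 2) *
      Real.logb 2 (1 + (γ / w) * (B - ∑ j ∈ Finset.Icc 1 N, ξ j))

/-- The admissible simplex `{ξ : ξ_j ≥ 0, ∑_{j=1}^N ξ_j ≤ B}`, as sequences supported
on coordinates `1,…,N`. -/
def adm (B : ℝ) (N : ℕ) : Set (ℕ → ℝ) :=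
  {ξ | (∀ j, 1 ≤ j → j ≤ N → 0 ≤ ξ j) ∧ (∀ j, j = 0 ∨ N < j → ξ j = 0)
      ∧ ∑ j ∈ Finset.Icc 1 N, ξ j ≤ B}

open Finset

/-!
Appending a coordinate `x` to a sequence with unspent budget `R` changes the throughput by
`p (1 - p)^(N + w) / 2 * marginalGain γ w R x`. This vanishes at `x = 0` and, by Bernoulli's
inequality, is positive for `0 < x < R / w`. So `T_{N+1}^*` exceeds the value of `T_N` at any point
that leaves some budget unspent, and it remains to see that such a point attains `T_N^*`. Start
from a maximiser that spends the whole budget: if its last coordinate `x` is positive, the budget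
left before it is `x`, and halving `x` does not decrease `T_N` (Bernoulli again); if it vanishes,
drop it and induct on `N`.
-/

theorem pow_lt_one_add_mul_mul_sub_pow {n : ℕ} (hn : 1 ≤ n) {A u : ℝ} (hu : 0 < u)
    (huA : n * u < A - 1) : A ^ n < (1 + n * u) * (A - u) ^ n := by
  have hn' : (1 : ℝ) ≤ n := by exact_mod_cast hn
  have hnu : u ≤ n * u := le_mul_of_one_le_left hu.le hn'
  have hA : 0 < A := by linarith
  have hbern : 1 + n * -(u / A) ≤ (1 + -(u / A)) ^ n := by
    refine one_add_mul_le_pow ?_ n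
    have : u / A < 1 := (div_lt_one hA).2 (by linarith)
    linarith [div_pos hu hA]
  have hgain : 1 < (1 + n * u) * (1 + n * -(u / A)) := by
    rw [show (1 + n * u) * (1 + n * -(u / A)) = 1 + n * u * (A - 1 - n * u) / A by
      field_simp; ring]
    have := div_pos (mul_pos (by linarith : 0 < n * u) (by linarith : 0 < A - 1 - n * u)) hA
    linarith
  calc A ^ n < (1 + n * u) * (1 + n * -(u / A)) * A ^ n := by
        nlinarith [pow_pos hA n]
    _ ≤ (1 + n * u) * ((1 + -(u / A)) ^ n * A ^ n) := by
        rw [mul_assoc]; gcongr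
    _ = (1 + n * u) * (A - u) ^ n := by
        rw [← mul_pow, show (1 + -(u / A)) * A = A - u by field_simp; ring]

theorem one_add_two_mul_lt_one_add_mul_mul_one_add_pow {n : ℕ} (hn : 1 ≤ n) {u : ℝ}
    (hu : 0 < u) : 1 + 2 * (n * u) < (1 + n * u) * (1 + u) ^ n := by
  have hnu : 0 < (n : ℝ) * u := mul_pos (by exact_mod_cast hn) hu
  calc 1 + 2 * (n * u) < (1 + n * u) * (1 + n * u) := by nlinarith
    _ ≤ (1 + n * u) * (1 + u) ^ n := by gcongr; exact one_add_mul_le_pow (by linarith) n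

theorem logb_lt_logb_add_mul_logb {b x y z : ℝ} (hb : 1 < b) (n : ℕ) (hz : 0 < z) (hx : 0 < x)
    (hy : 0 < y) (h : z < x * y ^ n) : logb b z < logb b x + n * logb b y := by
  rw [← logb_pow, ← logb_mul hx.ne' (pow_pos hy n).ne']
  exact logb_lt_logb hb hz h

noncomputable def marginalGain (γ : ℝ) (w : ℕ) (R x : ℝ) : ℝ :=
  logb 2 (1 + γ * x) + w * logb 2 (1 + γ / w * (R - x)) - w * logb 2 (1 + γ / w * R)

section marginalGain

variable {γ : ℝ} {w : ℕ}

@[simp]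
theorem marginalGain_zero (R : ℝ) : marginalGain γ w R 0 = 0 := by
  simp [marginalGain]

theorem marginalGain_pos (hγ : 0 < γ) (hw : 1 ≤ w) {R x : ℝ} (hx : 0 < x) (hxR : w * x < R) :
    0 < marginalGain γ w R x := by
  have hw' : (0 : ℝ) < w := by exact_mod_cast hw
  have hwu : (w : ℝ) * (γ / w * x) = γ * x := by field_simp
  have hγx : γ * x < γ / w * R := by
    rw [← hwu, mul_left_comm]
    exact mul_lt_mul_of_pos_left hxR (by positivity)
  have hRx : 0 ≤ γ / w * (R - x) := by
    have : x ≤ w * x := le_mul_of_one_le_left hx.le (by exact_mod_cast hw)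
    exact mul_nonneg (by positivity) (by linarith)
  have key := pow_lt_one_add_mul_mul_sub_pow hw (by positivity : 0 < γ / w * x)
    (A := 1 + γ / w * R) (by rw [hwu]; linarith)
  rw [hwu, show 1 + γ / w * R - γ / w * x = 1 + γ / w * (R - x) by ring] at key
  have := logb_lt_logb_add_mul_logb one_lt_two w (pow_pos (by linarith [mul_pos hγ hx]) w)
    (by positivity) (by linarith) key
  rw [logb_pow] at this
  unfold marginalGain
  linarith

theorem marginalGain_self_lt_half (hγ : 0 < γ) (hw : 1 ≤ w) {x : ℝ} (hx : 0 < x) :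
    marginalGain γ w x x < marginalGain γ w x (x / 2) := by
  have hw' : (0 : ℝ) < w := by exact_mod_cast hw
  have hwu : (w : ℝ) * (γ / w * (x / 2)) = γ * (x / 2) := by field_simp
  have key := one_add_two_mul_lt_one_add_mul_mul_one_add_pow hw
    (by positivity : 0 < γ / w * (x / 2))
  rw [hwu, show 2 * (γ * (x / 2)) = γ * x by ring] at key
  have := logb_lt_logb_add_mul_logb one_lt_two w (by positivity) (by positivity) (by positivity) key
  simp only [marginalGain, sub_self, mul_zero, add_zero, logb_one, sub_half]
  linarith

end marginalGain

section TN

variable {B γ p : ℝ} {w N : ℕ}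

theorem TN_congr {ξ η : ℕ → ℝ} (h : ∀ j ∈ Icc 1 N, ξ j = η j) :
    TN B γ p w N ξ = TN B γ p w N η := by
  have hS : ∀ k ∈ Icc 1 N, ∑ j ∈ Icc 1 k, ξ j = ∑ j ∈ Icc 1 k, η j := fun k hk =>
    sum_congr rfl fun j hj => h j (Icc_subset_Icc_right (mem_Icc.1 hk).2 hj)
  unfold TN
  rw [sum_congr rfl h]
  congr 2
  · congr 1
    exact sum_congr rfl fun j hj => by rw [h j hj]
  · exact sum_congr rfl fun k hk => by rw [hS k hk]

theorem TN_succ (ξ : ℕ → ℝ) :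
    TN B γ p w (N + 1) ξ = TN B γ p w N ξ
      + p * (1 - p) ^ (N + w) / 2 *
        marginalGain γ w (B - ∑ j ∈ Icc 1 N, ξ j) (ξ (N + 1)) := by
  simp only [TN, marginalGain, sum_Icc_succ_top (Nat.le_add_left 1 N),
    show N + 1 + w - 1 = N + w by omega, show w + (N + 1) = N + w + 1 by omega,
    show w + N = N + w by omega, sub_add_eq_sub_sub]
  ring

theorem TN_succ_update (ξ : ℕ → ℝ) (v : ℝ) :
    TN B γ p w (N + 1) (Function.update ξ (N + 1) v) = TN B γ p w N ξ
      + p * (1 - p) ^ (N + w) / 2 * marginalGain γ w (B - ∑ j ∈ Icc 1 N, ξ j) v := by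
  have h : ∀ j ∈ Icc 1 N, Function.update ξ (N + 1) v j = ξ j := fun j hj =>
    Function.update_of_ne (by simp at hj; omega) _ _
  rw [TN_succ, TN_congr h, sum_congr rfl h, Function.update_self]

end TN

section adm

variable {B : ℝ} {N : ℕ}

theorem sum_update_of_mem_Icc {ξ : ℕ → ℝ} {m : ℕ} (hm : m ∈ Icc 1 N) (v : ℝ) :
    ∑ j ∈ Icc 1 N, Function.update ξ m v j = ∑ j ∈ Icc 1 N, ξ j - ξ m + v := by
  rw [sum_update_of_mem hm, sdiff_singleton_eq_erase, ← add_sum_erase (Icc 1 N) ξ hm]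
  ring

theorem sum_Icc_le_of_mem_adm {ξ : ℕ → ℝ} (hξ : ξ ∈ adm B N) {k : ℕ} (hk : k ≤ N) :
    ∑ j ∈ Icc 1 k, ξ j ≤ B :=
  (sum_le_sum_of_subset_of_nonneg (Icc_subset_Icc_right hk) fun j hj _ =>
    hξ.1 j (mem_Icc.1 hj).1 (mem_Icc.1 hj).2).trans hξ.2.2

theorem zero_mem_adm (hB : 0 ≤ B) : (0 : ℕ → ℝ) ∈ adm B N :=
  ⟨fun _ _ _ => le_rfl, fun _ _ => rfl, by simpa using hB⟩

theorem isCompact_adm (hB : 0 ≤ B) : IsCompact (adm B N) := by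
  have hsub : adm B N ⊆ Set.univ.pi fun _ => Set.Icc 0 B := by
    intro ξ hξ j _
    by_cases hj : 1 ≤ j ∧ j ≤ N
    · refine ⟨hξ.1 j hj.1 hj.2, (single_le_sum (fun i hi => ?_) (mem_Icc.2 hj)).trans hξ.2.2⟩
      exact hξ.1 i (mem_Icc.1 hi).1 (mem_Icc.1 hi).2
    · rw [hξ.2.1 j (by omega)]
      exact ⟨le_rfl, hB⟩
  have hclosed : IsClosed (adm B N) := by
    simp only [adm, Set.ofPred_and, Set.ofPred_forall]
    refine .inter (isClosed_iInter fun j => isClosed_iInter fun _ => isClosed_iInter fun _ =>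
      isClosed_le continuous_const (continuous_apply j)) (.inter (isClosed_iInter fun j =>
      isClosed_iInter fun _ => isClosed_eq (continuous_apply j) continuous_const) ?_)
    exact isClosed_le (continuous_finsetSum _ fun j _ => continuous_apply j) continuous_const
  exact (isCompact_univ_pi fun _ => isCompact_Icc).of_isClosed_subset hclosed hsub

theorem mem_adm_succ_iff {ξ : ℕ → ℝ} (h : ξ (N + 1) = 0) :
    ξ ∈ adm B (N + 1) ↔ ξ ∈ adm B N := by
  simp only [adm, Set.mem_ofPred_eq, sum_Icc_succ_top (Nat.le_add_left 1 N), h, add_zero]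
  constructor
  · rintro ⟨hpos, hzero, hsum⟩
    refine ⟨fun j hj hjN => hpos j hj (by omega), fun j hj => ?_, hsum⟩
    rcases eq_or_ne j (N + 1) with rfl | hjN
    · exact h
    · exact hzero j (by omega)
  · rintro ⟨hpos, hzero, hsum⟩
    refine ⟨fun j hj hjN => ?_, fun j hj => hzero j (by omega), hsum⟩
    rcases eq_or_ne j (N + 1) with rfl | hjN
    · exact h.ge
    · exact hpos j hj (by omega)

theorem update_mem_adm {ξ : ℕ → ℝ} (hξ : ξ ∈ adm B N) {m : ℕ} (hm : m ∈ Icc 1 N)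
    {v : ℝ} (hv : 0 ≤ v) (hvB : ∑ j ∈ Icc 1 N, ξ j - ξ m + v ≤ B) :
    Function.update ξ m v ∈ adm B N := by
  have hm' := mem_Icc.1 hm
  refine ⟨fun j hj1 hjN => ?_, fun j hj => ?_, by rwa [sum_update_of_mem_Icc hm]⟩
  · rcases eq_or_ne j m with rfl | hjm
    · rwa [Function.update_self]
    · rw [Function.update_of_ne hjm]; exact hξ.1 j hj1 hjN
  · rw [Function.update_of_ne (by omega)]; exact hξ.2.1 j hj

end adm

theorem TN_continuousOn {B γ p : ℝ} {w N : ℕ} (hγ : 0 ≤ γ) :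
    ContinuousOn (TN B γ p w N) (adm B N) := by
  intro ξ hξ
  have hpower : ∀ j ∈ Icc 1 N, 1 + γ * ξ j ≠ 0 := fun j hj => by
    have := mul_nonneg hγ (hξ.1 j (mem_Icc.1 hj).1 (mem_Icc.1 hj).2)
    positivity
  have hslack : ∀ k ≤ N, 1 + γ / w * (B - ∑ j ∈ Icc 1 k, ξ j) ≠ 0 := fun k hk => by
    have := mul_nonneg (by positivity : 0 ≤ γ / w) (sub_nonneg.2 (sum_Icc_le_of_mem_adm hξ hk))
    positivity
  have hterm : ∀ (c : ℝ) (f : (ℕ → ℝ) → ℝ), Continuous f → f ξ ≠ 0 →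
      ContinuousAt (fun ξ => c * logb 2 (f ξ)) ξ := fun c f hf h =>
    continuousAt_const.mul (hf.continuousAt.logb h)
  refine ContinuousAt.continuousWithinAt ?_
  unfold TN
  exact ((continuousAt_const.add (tendsto_finsetSum _ fun j hj =>
    hterm _ (fun ξ => 1 + γ * ξ j) (by fun_prop) (hpower j hj))).add
    (tendsto_finsetSum _ fun k hk => hterm _ (fun ξ => 1 + γ / w * (B - ∑ j ∈ Icc 1 k, ξ j))
      (by fun_prop) (hslack k (mem_Icc.1 hk).2))).add
    (hterm _ _ (by fun_prop) (hslack N le_rfl))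

section extend

variable {B γ p : ℝ} {w : ℕ}

theorem exists_mem_adm_TN_le_sum_lt (hB : 0 < B) (hγ : 0 < γ) (hw : 1 ≤ w) (hp : 0 ≤ p)
    (hp1 : p ≤ 1) : ∀ N, ∀ ξ ∈ adm B N,
      ∃ η ∈ adm B N, TN B γ p w N ξ ≤ TN B γ p w N η ∧ ∑ j ∈ Icc 1 N, η j < B
  | 0, ξ, hξ => ⟨ξ, hξ, le_rfl, by simpa using hB⟩
  | N + 1, ξ, hξ => by
    by_cases hslack : ∑ j ∈ Icc 1 (N + 1), ξ j < B
    · exact ⟨ξ, hξ, le_rfl, hslack⟩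
    have hsum : ∑ j ∈ Icc 1 (N + 1), ξ j = B := le_antisymm hξ.2.2 (not_lt.1 hslack)
    have hsplit := sum_Icc_succ_top (Nat.le_add_left 1 N) ξ
    have hlast : N + 1 ∈ Icc 1 (N + 1) := mem_Icc.2 ⟨Nat.le_add_left 1 N, le_rfl⟩
    rcases (hξ.1 (N + 1) (Nat.le_add_left 1 N) le_rfl).eq_or_lt with hzero | hpos
    · obtain ⟨η, hη, hle, hηB⟩ :=
        exists_mem_adm_TN_le_sum_lt hB hγ hw hp hp1 N ξ ((mem_adm_succ_iff hzero.symm).1 hξ)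
      have hη0 : η (N + 1) = 0 := hη.2.1 _ (Or.inr N.lt_add_one)
      refine ⟨η, (mem_adm_succ_iff hη0).2 hη, ?_, ?_⟩
      · simpa [TN_succ, ← hzero, hη0] using hle
      · rwa [sum_Icc_succ_top (Nat.le_add_left 1 N), hη0, add_zero]
    · set x := ξ (N + 1)
      have hR : B - ∑ j ∈ Icc 1 N, ξ j = x := by linarith
      refine ⟨Function.update ξ (N + 1) (x / 2),
        update_mem_adm hξ hlast (by positivity) (by linarith), ?_, ?_⟩
      · rw [TN_succ_update, TN_succ, hR]
        have := sub_nonneg.2 hp1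
        gcongr
        exact (marginalGain_self_lt_half hγ hw hpos).le
      · rw [sum_update_of_mem_Icc hlast]
        linarith

theorem exists_mem_adm_succ_TN_gt (hγ : 0 < γ) (hw : 1 ≤ w) (hp : 0 < p) (hp1 : p < 1)
    {N : ℕ} {ξ : ℕ → ℝ} (hξ : ξ ∈ adm B N) (hslack : ∑ j ∈ Icc 1 N, ξ j < B) :
    ∃ η ∈ adm B (N + 1), TN B γ p w N ξ < TN B γ p w (N + 1) η := by
  set R := B - ∑ j ∈ Icc 1 N, ξ j
  have hR : 0 < R := sub_pos.2 hslack
  have hw' : (0 : ℝ) < w := by exact_mod_cast hw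
  set x := R / (2 * w)
  have hx : 0 < x := by positivity
  have hwx : w * x = R / 2 := by simp only [x]; field_simp
  have hxwx : x ≤ w * x := le_mul_of_one_le_left hx.le (by exact_mod_cast hw)
  have hξ0 : ξ (N + 1) = 0 := hξ.2.1 _ (Or.inr N.lt_add_one)
  refine ⟨Function.update ξ (N + 1) x,
    update_mem_adm ((mem_adm_succ_iff hξ0).2 hξ) (mem_Icc.2 ⟨Nat.le_add_left 1 N, le_rfl⟩)
      hx.le ?_, ?_⟩
  · rw [sum_Icc_succ_top (Nat.le_add_left 1 N), hξ0]
    linarith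
  · rw [TN_succ_update, lt_add_iff_pos_right]
    have := sub_pos.2 hp1
    exact mul_pos (by positivity) (marginalGain_pos hγ hw hx (by linarith))

end extend

theorem TNstar_strictMono_general (B γ p : ℝ) (w : ℕ) (hB : 0 < B) (hγ : 0 < γ)
    (hw : 1 ≤ w) (hp : 0 < p) (hp1 : p < 1) (N : ℕ) :
    sSup (TN B γ p w N '' adm B N) < sSup (TN B γ p w (N + 1) '' adm B (N + 1)) := by
  obtain ⟨ξ, hξ, hsup⟩ := (isCompact_adm hB.le).exists_sSup_image_eq
    ⟨0, zero_mem_adm hB.le⟩ (TN_continuousOn (p := p) (w := w) hγ.le)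
  obtain ⟨ξ', hξ', hle, hslack⟩ := exists_mem_adm_TN_le_sum_lt hB hγ hw hp.le hp1.le N ξ hξ
  obtain ⟨η, hη, hlt⟩ := exists_mem_adm_succ_TN_gt hγ hw hp hp1 hξ' hslack
  have hbdd : BddAbove (TN B γ p w (N + 1) '' adm B (N + 1)) :=
    ((isCompact_adm hB.le).image_of_continuousOn (TN_continuousOn hγ.le)).bddAbove
  calc sSup (TN B γ p w N '' adm B N) = TN B γ p w N ξ := hsup
    _ ≤ TN B γ p w N ξ' := hle
    _ < TN B γ p w (N + 1) η := hlt
    _ ≤ sSup (TN B γ p w (N + 1) '' adm B (N + 1)) := le_csSup hbdd (Set.mem_image_of_mem _ hη)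

/-- The sequence `N ↦ T_N^*` of maxima of `T_N` over the admissible simplex is
strictly increasing. -/
theorem TNstar_strictMono (B γ p : ℝ) (w : ℕ) (hB : 0 < B) (hγ : 0 < γ)
    (hw : 1 ≤ w) (hp : 0 < p) (hp1 : p < 1) (N : ℕ) (hN : 1 ≤ N) :
    sSup (TN B γ p w N '' adm B N) < sSup (TN B γ p w (N + 1) '' adm B (N + 1)) :=
  TNstar_strictMono_general B γ p w hB hγ hw hp hp1 N
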